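/- arXiv:2502.18497 — 2 statements merged into one kernel-verified Lean document; each statement's English description precedes it below -/
import Mathlib

section
/- Modularity is invariant under aggregation: if each community of partition P of graph G is contracted to a single supernode with edge weights w'(c, c') = ∑_{i ∈ c, j ∈ c'} w(i, j), then the modularity of the singleton partition of the aggregated graph equals the modularity of P in G. -/
open Finset

variable {V : Type*}

/-- Total edge weight within a community: `e_c = ∑_{i,j ∈ c} w(i,j)`. -/
def eC (w : V → V → ℝ) (c : Finset V) : ℝ := ∑ i ∈ c, ∑ j ∈ c, w i j

/-- `K_c^{in} = ∑_{i ∈ V, j ∈ c} w(i,j)`. -/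
def Kin [Fintype V] (w : V → V → ℝ) (c : Finset V) : ℝ := ∑ i : V, ∑ j ∈ c, w i j

/-- `K_c^{out} = ∑_{i ∈ c, j ∈ V} w(i,j)`. -/
def Kout [Fintype V] (w : V → V → ℝ) (c : Finset V) : ℝ := ∑ i ∈ c, ∑ j : V, w i j

/-- Total edge weight `m = ∑_{i,j ∈ V} w(i,j)`. -/
def totW [Fintype V] (w : V → V → ℝ) : ℝ := ∑ i : V, ∑ j : V, w i j

/-- Modularity of a partition `P`:
`Q = (1/m) ∑_{c ∈ P} (e_c − γ K_c^{in} K_c^{out} / m)`. -/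
noncomputable def modularity [Fintype V] (w : V → V → ℝ) (γ : ℝ) (P : Finset (Finset V)) : ℝ :=
  (1 / totW w) * ∑ c ∈ P, (eC w c - γ * Kin w c * Kout w c / totW w)

/-- `P` is a partition of the vertex set: communities are pairwise disjoint
and cover all vertices. -/
def IsPartition [Fintype V] (P : Finset (Finset V)) : Prop :=
  (∀ c ∈ P, ∀ c' ∈ P, c ≠ c' → Disjoint c c') ∧ (∀ v : V, ∃ c ∈ P, v ∈ c)

/-- Aggregated weights on the supernode graph whose vertices are the
communities of `P`: `w'(c, c') = ∑_{i ∈ c, j ∈ c'} w(i,j)`. -/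
def aggWeight [Fintype V] (w : V → V → ℝ) (P : Finset (Finset V)) :
    {c // c ∈ P} → {c // c ∈ P} → ℝ :=
  fun c c' => ∑ i ∈ c.1, ∑ j ∈ c'.1, w i j

lemma sum_partition [Fintype V] [DecidableEq V] {P : Finset (Finset V)}
    (hP : IsPartition P) (f : V → ℝ) :
    ∑ c ∈ P, ∑ i ∈ c, f i = ∑ i : V, f i := by
  rw [← Finset.sum_biUnion]
  · congr 1
    ext v
    simp only [Finset.mem_biUnion, Finset.mem_univ, iff_true, id]
    obtain ⟨c, hc, hv⟩ := hP.2 v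
    exact ⟨c, hc, hv⟩
  · intro c hc c' hc' hne
    exact hP.1 c hc c' hc' hne

theorem modularity_invariant_under_aggregation [Fintype V] [DecidableEq V]
    (w : V → V → ℝ) (γ : ℝ) (hm : 0 < totW w)
    (P : Finset (Finset V)) (hP : IsPartition P) :
    modularity (aggWeight w P) γ
        ((Finset.univ : Finset {c // c ∈ P}).image (fun x => ({x} : Finset {c // c ∈ P}))) =
      modularity w γ P := by
  classical
  set w' := aggWeight w P with hw'
  have hsub : ∀ f : V → ℝ, ∑ x : {c // c ∈ P}, ∑ i ∈ x.1, f i = ∑ i : V, f i := by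
    intro f
    rw [Finset.sum_coe_sort P (fun c => ∑ i ∈ c, f i), sum_partition hP]
  have htot : totW w' = totW w := by
    unfold totW
    simp only [hw', aggWeight]
    calc ∑ x : {c // c ∈ P}, ∑ y : {c // c ∈ P}, ∑ i ∈ x.1, ∑ j ∈ y.1, w i j
        = ∑ x : {c // c ∈ P}, ∑ i ∈ x.1, ∑ y : {c // c ∈ P}, ∑ j ∈ y.1, w i j := by
          exact Finset.sum_congr rfl fun x _ => Finset.sum_comm
      _ = ∑ x : {c // c ∈ P}, ∑ i ∈ x.1, ∑ j : V, w i j := by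
          exact Finset.sum_congr rfl fun x _ => Finset.sum_congr rfl fun i _ => hsub _
      _ = ∑ i : V, ∑ j : V, w i j := hsub _
  have hinj : Function.Injective (fun x : {c // c ∈ P} => ({x} : Finset {c // c ∈ P})) := by
    intro a b h; simpa using h
  unfold modularity
  rw [htot]
  congr 1
  rw [Finset.sum_image (fun a _ b _ h => hinj h)]
  rw [← Finset.sum_coe_sort P (fun c => eC w c - γ * Kin w c * Kout w c / totW w)]
  refine Finset.sum_congr rfl fun x _ => ?_
  have he : eC w' {x} = eC w x.1 := by
    simp [eC, hw', aggWeight]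
  have hin : Kin w' {x} = Kin w x.1 := by
    simp only [Kin, Finset.sum_singleton, hw', aggWeight]
    exact hsub _
  have hout : Kout w' {x} = Kout w x.1 := by
    simp only [Kout, Finset.sum_singleton, hw', aggWeight]
    calc ∑ y : {c // c ∈ P}, ∑ i ∈ x.1, ∑ j ∈ y.1, w i j
        = ∑ i ∈ x.1, ∑ y : {c // c ∈ P}, ∑ j ∈ y.1, w i j := Finset.sum_comm
      _ = ∑ i ∈ x.1, ∑ j : V, w i j :=
          Finset.sum_congr rfl fun i _ => hsub _
  rw [he, hin, hout]
end

section
/- In the Decouple procedure, the set of selected moves M satisfies: no selected move has its source community equal to the target community of another selected move, and no selected move has its target community equal to the source community of another selected move; equivalently, the set of source communities of M and the set of target communities of M are disjoint (assuming every candidate move has c_from ≠ c_to). -/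
open Finset

/-- The Decouple procedure: process candidate moves `(u, c_from, c_to, r)` in
order, maintaining the sets of emitter (`Cf`) and acceptor (`Ct`) communities;
stop as soon as a move's source community is already an acceptor or its target
community is already an emitter. -/
def decouple {U C : Type*} [DecidableEq C] :
    List (U × C × C × ℝ) → Finset C → Finset C → List (U × C × C × ℝ)
  | [], _, _ => []
  | (m :: rest), Cf, Ct =>
    if m.2.1 ∈ Ct ∨ m.2.2.1 ∈ Cf then []
    else m :: decouple rest (insert m.2.1 Cf) (insert m.2.2.1 Ct)

section Decouple

variable {U C : Type*} [DecidableEq C]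

theorem mem_decouple_cons {m a : U × C × C × ℝ} {rest : List (U × C × C × ℝ)}
    {Cf Ct : Finset C} :
    m ∈ decouple (a :: rest) Cf Ct ↔ (a.2.1 ∉ Ct ∧ a.2.2.1 ∉ Cf) ∧
      (m = a ∨ m ∈ decouple rest (insert a.2.1 Cf) (insert a.2.2.1 Ct)) := by
  rw [decouple]
  split_ifs with h
  · simp only [List.not_mem_nil, false_iff, not_and]
    exact fun hfree => absurd h (not_or.mpr hfree)
  · simp only [List.mem_cons, not_or.mp h, not_false_eq_true, and_self, true_and]

theorem not_mem_of_mem_decouple {l : List (U × C × C × ℝ)} {Cf Ct : Finset C}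
    {m : U × C × C × ℝ} (hm : m ∈ decouple l Cf Ct) : m.2.1 ∉ Ct ∧ m.2.2.1 ∉ Cf := by
  induction l generalizing Cf Ct with
  | nil => simp [decouple] at hm
  | cons a rest ih =>
    obtain ⟨hfree, rfl | hm⟩ := mem_decouple_cons.mp hm
    · exact hfree
    · obtain ⟨hsrc, htgt⟩ := ih hm
      exact ⟨fun h => hsrc (mem_insert_of_mem h), fun h => htgt (mem_insert_of_mem h)⟩

/-- Each accepted move records its source and target before the later moves are tested, so a
later move can neither take an earlier source as target nor an earlier target as source. -/
theorem source_ne_target_of_mem_decouple {l : List (U × C × C × ℝ)}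
    (hne : ∀ m ∈ l, m.2.1 ≠ m.2.2.1) {Cf Ct : Finset C} {m₁ m₂ : U × C × C × ℝ}
    (hm₁ : m₁ ∈ decouple l Cf Ct) (hm₂ : m₂ ∈ decouple l Cf Ct) : m₁.2.1 ≠ m₂.2.2.1 := by
  induction l generalizing Cf Ct with
  | nil => simp [decouple] at hm₁
  | cons a rest ih =>
    obtain ⟨-, rfl | hm₁⟩ := mem_decouple_cons.mp hm₁ <;>
    obtain ⟨-, rfl | hm₂⟩ := mem_decouple_cons.mp hm₂
    · exact hne _ List.mem_cons_self
    · exact fun h => (not_mem_of_mem_decouple hm₂).2 (h ▸ mem_insert_self _ _)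
    · exact fun h => (not_mem_of_mem_decouple hm₁).1 (h ▸ mem_insert_self _ _)
    · exact ih (fun m hm => hne m (List.mem_cons_of_mem _ hm)) hm₁ hm₂

end Decouple

theorem decouple_sources_targets_disjoint {U C : Type*} [DecidableEq C]
    (l : List (U × C × C × ℝ)) (hne : ∀ m ∈ l, m.2.1 ≠ m.2.2.1) :
    ∀ m₁ ∈ decouple l ∅ ∅, ∀ m₂ ∈ decouple l ∅ ∅, m₁.2.1 ≠ m₂.2.2.1 :=
  fun _ hm₁ _ hm₂ => source_ne_target_of_mem_decouple hne hm₁ hm₂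
end
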